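/- Let N and L be positive integers. Let x ∈ ℝ^N with x_k ∈ {−1,1} for all k and y ∈ ℝ^N with −1 ≤ y_k ≤ 1 for all k. If x and y have the same FROG trace, i.e. |∑_{k=0}^{N−1} x_k x_{(k+mL) mod N} e^{−2πikn/N}|² = |∑_{k=0}^{N−1} y_k y_{(k+mL) mod N} e^{−2πikn/N}|² for all n = 0,…,N−1 and m = 0,…,⌈N/L⌉−1, then y_k ∈ {−1,1} for all k. -/

import Mathlib

open scoped BigOperators
open Finset

/-- Discrete Fourier transform of `x ∈ ℂ^N`. -/
noncomputable def dft {N : ℕ} (x : Fin N → ℂ) (n : Fin N) : ℂ :=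
  ∑ k : Fin N, x k * Complex.exp (-2 * Real.pi * Complex.I * ((k : ℕ) : ℂ) * ((n : ℕ) : ℂ) / (N : ℂ))

/-- Inverse discrete Fourier transform. -/
noncomputable def idft {N : ℕ} (u : Fin N → ℂ) (j : Fin N) : ℂ :=
  (1 / (N : ℂ)) * ∑ n : Fin N, u n * Complex.exp (2 * Real.pi * Complex.I * ((j : ℕ) : ℂ) * ((n : ℕ) : ℂ) / (N : ℂ))

/-- `M`-point oversampled discrete Fourier transform of `x ∈ ℂ^N`. -/
noncomputable def odft {N : ℕ} (M : ℕ) (x : Fin N → ℂ) (n : Fin M) : ℂ :=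
  ∑ k : Fin N, x k * Complex.exp (-2 * Real.pi * Complex.I * ((k : ℕ) : ℂ) * ((n : ℕ) : ℂ) / (M : ℂ))

/-- Periodic autocorrelation of `x ∈ ℂ^N`. -/
noncomputable def autp {N : ℕ} (x : Fin N → ℂ) (j : Fin N) : ℂ :=
  ∑ k : Fin N, x (k + j) * (starRingEnd ℂ) (x k)

/-- Extension of `x ∈ ℂ^N` to `ℤ` by zero. -/
noncomputable def extz {N : ℕ} (x : Fin N → ℂ) (i : ℤ) : ℂ :=
  if h : 0 ≤ i ∧ i < (N : ℤ) then x ⟨i.toNat, by omega⟩ else 0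

/-- (Regular) autocorrelation of `x ∈ ℂ^N`, as a function on `ℤ`. -/
noncomputable def aut {N : ℕ} (x : Fin N → ℂ) (j : ℤ) : ℂ :=
  ∑ k : Fin N, extz x (((k : ℕ) : ℤ) + j) * (starRingEnd ℂ) (extz x ((k : ℕ) : ℤ))

/-- Circular convolution on `ℂ^N`. -/
noncomputable def cconv {N : ℕ} (v x : Fin N → ℂ) (j : Fin N) : ℂ :=
  ∑ k : Fin N, v k * x (j - k)

/-- The ℓ² norm on `ℂ^N`. -/
noncomputable def l2 {N : ℕ} (x : Fin N → ℂ) : ℝ :=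
  Real.sqrt (∑ k : Fin N, ‖x k‖ ^ 2)

/-- The circular finite-difference operator. -/
noncomputable def nabla {N : ℕ} [NeZero N] (x : Fin N → ℂ) (k : Fin N) : ℂ :=
  x (k + 1) - x k

/-- The sup norm on `ℂ^N`. -/
noncomputable def linf {N : ℕ} [NeZero N] (x : Fin N → ℂ) : ℝ :=
  Finset.univ.sup' Finset.univ_nonempty (fun k => ‖x k‖)

/-- The sup norm on `ℝ^N`. -/
noncomputable def linfR {N : ℕ} [NeZero N] (x : Fin N → ℝ) : ℝ :=
  Finset.univ.sup' Finset.univ_nonempty (fun k => |x k|)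

/-- Cyclic index shift: `k ↦ (k + s) mod N`. -/
def shiftIdx {N : ℕ} [NeZero N] (k : Fin N) (s : ℕ) : Fin N :=
  ⟨((k : ℕ) + s) % N, Nat.mod_lt _ (Nat.pos_of_ne_zero (NeZero.ne N))⟩

/-- A window of length `W` with constant value `a`, extended by zero. -/
noncomputable def win (W : ℕ) (a : ℂ) (i : ℤ) : ℂ :=
  if 0 ≤ i ∧ i < (W : ℤ) then a else 0

/-!
At zero lag and zero frequency the FROG trace of a real signal `y` is `(∑ₖ yₖ²)²`. Matching it
with the trace of a `±1` signal forces `∑ₖ yₖ² = N`, and since every `yₖ² ≤ 1` this is only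
possible if every `yₖ² = 1`.
-/

lemma shiftIdx_zero {N : ℕ} [NeZero N] (k : Fin N) : shiftIdx k 0 = k :=
  Fin.ext (Nat.mod_eq_of_lt k.isLt)

lemma dft_zero {N : ℕ} [NeZero N] (x : Fin N → ℂ) : dft x 0 = ∑ k, x k := by
  simp [dft]

lemma norm_dft_zero_of_nonneg {N : ℕ} [NeZero N] {a : Fin N → ℝ} (ha : ∀ k, 0 ≤ a k) :
    ‖dft (fun k => (a k : ℂ)) 0‖ = ∑ k, a k := by
  rw [dft_zero, ← Complex.ofReal_sum, Complex.norm_real, Real.norm_of_nonneg]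
  exact sum_nonneg fun k _ => ha k

/-- box relaxation for `{-1,1}`-valued signals under the FROG
trace. -/
theorem box_to_pm_one_frog {N L : ℕ} [NeZero N] (hL : 0 < L) (x y : Fin N → ℝ)
    (hx : ∀ k, x k = -1 ∨ x k = 1) (hy : ∀ k, -1 ≤ y k ∧ y k ≤ 1)
    (h : ∀ m : ℕ, m < (N + L - 1) / L → ∀ n : Fin N,
      (‖∑ k : Fin N, ((x k * x (shiftIdx k (m * L)) : ℝ) : ℂ) *
        Complex.exp (-2 * Real.pi * Complex.I * ((k : ℕ) : ℂ) * ((n : ℕ) : ℂ) / (N : ℂ))‖) ^ 2 =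
      (‖∑ k : Fin N, ((y k * y (shiftIdx k (m * L)) : ℝ) : ℂ) *
        Complex.exp (-2 * Real.pi * Complex.I * ((k : ℕ) : ℂ) * ((n : ℕ) : ℂ) / (N : ℂ))‖) ^ 2) :
    ∀ k, y k = -1 ∨ y k = 1 := by
  have hx_sq : ∀ k, x k * x k = 1 := fun k => by rcases hx k with hk | hk <;> norm_num [hk]
  have hy_sq : ∀ k, y k * y k ≤ 1 := fun k => by nlinarith [hy k]
  have h_trace : ‖dft (fun k => ((x k * x k : ℝ) : ℂ)) 0‖ ^ 2 =
      ‖dft (fun k => ((y k * y k : ℝ) : ℂ)) 0‖ ^ 2 := by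
    have h_zero_lag := h 0 (Nat.div_pos (by have := NeZero.one_le (n := N); omega) hL) 0
    simp only [zero_mul, shiftIdx_zero] at h_zero_lag
    exact h_zero_lag
  rw [norm_dft_zero_of_nonneg fun k => mul_self_nonneg (x k),
    norm_dft_zero_of_nonneg fun k => mul_self_nonneg (y k),
    sq_eq_sq₀ (sum_nonneg fun k _ => mul_self_nonneg (x k))
      (sum_nonneg fun k _ => mul_self_nonneg (y k))] at h_trace
  have h_energy := (sum_eq_sum_iff_of_le fun k _ => (hy_sq k).trans (hx_sq k).ge).mp h_trace.symm
  intro k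
  exact (mul_self_eq_one_iff.mp ((h_energy k (mem_univ k)).trans (hx_sq k))).symm
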